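/- arXiv:1503.04984 — 2 statements merged into one kernel-verified Lean document; each statement's English description precedes it below -/
import Mathlib

section
/- With c(j,n) := (−1)^(popcount of 2^n − j), for all 1 ≤ l ≤ n and 1 ≤ j ≤ 2^(n−l) one has c(2^l·j − 2^(l−1) + 1, n) = −c(2^l·j − 2^(l−1) + 1, n+1). -/
/-!
For `1 ≤ k ≤ 2 ^ n` we have `2 ^ (n + 1) - k = (2 ^ n - k) + 2 ^ n` with `2 ^ n - k < 2 ^ n`,
so the binary expansion of `2 ^ (n + 1) - k` is that of `2 ^ n - k` with one more leading `1`,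
and the sign flips.
-/

/-- Number of ones in the binary expansion. -/
def popcount (m : ℕ) : ℕ := (Nat.digits 2 m).count 1

/-- Sign of the `j`-th element of the `n`-th row (spectrally negative case). -/
def c (j n : ℕ) : ℤ := (-1) ^ popcount (2 ^ n - j)

theorem popcount_add_two_pow {m n : ℕ} (h : m < 2 ^ n) :
    popcount (m + 2 ^ n) = popcount m + 1 := by
  have hlen : (Nat.digits 2 m).length ≤ n := (Nat.digits_length_le_iff one_lt_two m).2 h
  have hdigits := Nat.digits_append_zeroes_append_digits (b := 2)
    (k := n - (Nat.digits 2 m).length) (m := 1) (n := m) one_lt_two one_pos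
  rw [Nat.add_sub_cancel' hlen, mul_one] at hdigits
  rw [popcount, popcount, ← hdigits]
  simp [List.count_append, List.count_replicate]

theorem c_eq_neg_c_succ {k n : ℕ} (hk : 1 ≤ k) (hkn : k ≤ 2 ^ n) : c k n = -c k (n + 1) := by
  have hsplit : 2 ^ (n + 1) - k = (2 ^ n - k) + 2 ^ n := by rw [pow_succ]; omega
  rw [c, c, hsplit, popcount_add_two_pow (by omega), pow_succ]
  ring

theorem stmt_9_general (n l j : ℕ) (hl2 : l ≤ n)
    (hj2 : j ≤ 2 ^ (n - l)) :
    c (2 ^ l * j - 2 ^ (l - 1) + 1) n = - c (2 ^ l * j - 2 ^ (l - 1) + 1) (n + 1) := by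
  apply c_eq_neg_c_succ (Nat.le_add_left 1 _)
  have hjl : 2 ^ l * j ≤ 2 ^ n :=
    calc 2 ^ l * j ≤ 2 ^ l * 2 ^ (n - l) := Nat.mul_le_mul_left _ hj2
      _ = 2 ^ n := by rw [← pow_add, Nat.add_sub_cancel' hl2]
  have := Nat.one_le_two_pow (n := l - 1)
  have := Nat.one_le_two_pow (n := n)
  omega

theorem stmt_9 (n l j : ℕ) (hn : 1 ≤ n) (hl1 : 1 ≤ l) (hl2 : l ≤ n)
    (hj1 : 1 ≤ j) (hj2 : j ≤ 2 ^ (n - l)) :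
    c (2 ^ l * j - 2 ^ (l - 1) + 1) n = - c (2 ^ l * j - 2 ^ (l - 1) + 1) (n + 1) :=
  stmt_9_general n l j hl2 hj2
end

section
/- As l ranges over 2,…,k and j over 1,…,2^(k−l), the numbers 2^l·j − 2^(l−1) + 2 form a partition of the even numbers {4, 6, …, 2^k}: each even number in this set is represented exactly once, and for each l there are exactly 2^(k−l) such numbers. -/
/-!
Since `2 ^ l * j - 2 ^ (l - 1) = 2 ^ (l - 1) * (2 * j - 1)`, the pair `(l, j)` encodes the
factorisation of `m - 2` as a power of two times an odd number, which exists and is unique.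
The exponent `l - 1` is positive exactly when `m` is even, and `m - 2 < 2 ^ k` translates into
`l ≤ k` and `j ≤ 2 ^ (k - l)`.
-/

lemma two_pow_mul_odd_inj {s t u v : ℕ} (hu : Odd u) (hv : Odd v)
    (h : 2 ^ s * u = 2 ^ t * v) : s = t ∧ u = v := by
  wlog hst : s ≤ t generalizing s t u v
  · exact (this hv hu h.symm (by omega)).imp Eq.symm Eq.symm
  obtain ⟨d, rfl⟩ := Nat.exists_eq_add_of_le hst
  rw [pow_add, mul_assoc] at h
  have hu_eq : u = 2 ^ d * v := Nat.eq_of_mul_eq_mul_left (by positivity) h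
  cases d with
  | zero => simpa using hu_eq
  | succ d =>
    rw [hu_eq, pow_succ, mul_comm _ 2, mul_assoc] at hu
    exact absurd (even_two_mul _) (Nat.not_even_iff_odd.mpr hu)

lemma two_pow_mul_sub_two_pow_pred {l : ℕ} (hl : 1 ≤ l) (j : ℕ) :
    2 ^ l * j - 2 ^ (l - 1) = 2 ^ (l - 1) * (2 * j - 1) := by
  obtain ⟨a, rfl⟩ := Nat.exists_eq_add_of_le' hl
  rw [Nat.add_sub_cancel, Nat.mul_sub_one, pow_succ, mul_assoc]

lemma eq_of_two_pow_mul_sub_two_pow_pred_eq {l l' j j' : ℕ} (hl : 1 ≤ l) (hl' : 1 ≤ l')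
    (hj : 1 ≤ j) (hj' : 1 ≤ j') (h : 2 ^ l * j - 2 ^ (l - 1) = 2 ^ l' * j' - 2 ^ (l' - 1)) :
    l = l' ∧ j = j' := by
  rw [two_pow_mul_sub_two_pow_pred hl, two_pow_mul_sub_two_pow_pred hl'] at h
  obtain ⟨hl_eq, hj_eq⟩ := two_pow_mul_odd_inj ⟨j - 1, by omega⟩ ⟨j' - 1, by omega⟩ h
  omega

lemma lt_of_two_pow_mul_lt_two_pow {a b k : ℕ} (hb : 1 ≤ b) (h : 2 ^ a * b < 2 ^ k) :
    a < k ∧ b < 2 ^ (k - a) := by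
  have hak : a < k :=
    (Nat.pow_lt_pow_iff_right (by norm_num)).mp (lt_of_le_of_lt (Nat.le_mul_of_pos_right _ hb) h)
  refine ⟨hak, Nat.lt_of_mul_lt_mul_left (a := 2 ^ a) ?_⟩
  rwa [← pow_add, Nat.add_sub_cancel' hak.le]

lemma exists_two_pow_mul_sub_two_pow_pred_eq {n k : ℕ} (hn : n ≠ 0) (hn_even : Even n)
    (hnk : n < 2 ^ k) :
    ∃ l j, 2 ≤ l ∧ l ≤ k ∧ 1 ≤ j ∧ j ≤ 2 ^ (k - l) ∧ 2 ^ l * j - 2 ^ (l - 1) = n := by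
  obtain ⟨a, b, hb, rfl⟩ := Nat.exists_eq_two_pow_mul_odd hn
  have ha : a ≠ 0 := by
    rintro rfl
    exact Nat.not_even_iff_odd.mpr hb (by simpa using hn_even)
  obtain ⟨hak, hbk⟩ := lt_of_two_pow_mul_lt_two_pow hb.pos hnk
  have hpow : 2 ^ (k - a) = 2 * 2 ^ (k - (a + 1)) := by
    rw [← pow_succ']
    congr 1
    omega
  obtain ⟨c, rfl⟩ := hb
  refine ⟨a + 1, c + 1, by omega, hak, by omega, by omega, ?_⟩
  rw [two_pow_mul_sub_two_pow_pred (by omega), Nat.add_sub_cancel]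
  exact congrArg _ (by omega)

theorem stmt_11_general (k : ℕ) :
    (∀ m : ℕ, 4 ≤ m → m ≤ 2 ^ k → Even m →
      ∃! p : ℕ × ℕ, (2 ≤ p.1 ∧ p.1 ≤ k ∧ 1 ≤ p.2 ∧ p.2 ≤ 2 ^ (k - p.1)) ∧
        2 ^ p.1 * p.2 - 2 ^ (p.1 - 1) + 2 = m) ∧
    (∀ l : ℕ, 2 ≤ l → l ≤ k →
      ((Finset.Icc 1 (2 ^ (k - l))).image (fun j => 2 ^ l * j - 2 ^ (l - 1) + 2)).card
        = 2 ^ (k - l)) := by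
  refine ⟨fun m hm4 hmk hm_even => ?_, fun l hl2 _ => ?_⟩
  · obtain ⟨l, j, hl2, hlk, hj1, hjk, hlj⟩ := exists_two_pow_mul_sub_two_pow_pred_eq
      (n := m - 2) (k := k) (by omega) ((Nat.even_sub (by omega)).mpr (by simp [hm_even]))
      (by omega)
    refine ⟨(l, j), ⟨⟨hl2, hlk, hj1, hjk⟩, by dsimp only; omega⟩, ?_⟩
    rintro ⟨l', j'⟩ ⟨⟨hl2', -, hj1', -⟩, hlj'⟩
    dsimp only at hl2' hj1' hlj'
    obtain ⟨rfl, rfl⟩ := eq_of_two_pow_mul_sub_two_pow_pred_eq (l := l') (l' := l)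
      (by omega) (by omega) hj1' hj1 (by omega)
    rfl
  · refine (Finset.card_image_of_injOn fun j hj j' hj' h => ?_).trans (by simp)
    simp only [Finset.coe_Icc, Set.mem_Icc] at hj hj'
    exact (eq_of_two_pow_mul_sub_two_pow_pred_eq (l := l) (l' := l) (by omega) (by omega) hj.1
      hj'.1 (by simpa using h)).2

theorem stmt_11 (k : ℕ) (hk : 2 ≤ k) :
    (∀ m : ℕ, 4 ≤ m → m ≤ 2 ^ k → Even m →
      ∃! p : ℕ × ℕ, (2 ≤ p.1 ∧ p.1 ≤ k ∧ 1 ≤ p.2 ∧ p.2 ≤ 2 ^ (k - p.1)) ∧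
        2 ^ p.1 * p.2 - 2 ^ (p.1 - 1) + 2 = m) ∧
    (∀ l : ℕ, 2 ≤ l → l ≤ k →
      ((Finset.Icc 1 (2 ^ (k - l))).image (fun j => 2 ^ l * j - 2 ^ (l - 1) + 2)).card
        = 2 ^ (k - l)) :=
  stmt_11_general k
end
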